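/- If X has the xgamma distribution with parameter θ > 0, then Var(X) = (θ² + 8θ + 3)/(θ²(1+θ)²). -/

import Mathlib

/-!
The moments of `x ↦ xᵏ e^{-θx}` on `(0, ∞)` are Gamma integrals, `k! / θ^(k+1)`. The xgamma
density is a combination of the cases `k` and `k + 2`, which gives
`E[X] = (θ + 3) / (θ(1 + θ))` and `E[X²] = 2(θ + 6) / (θ²(1 + θ))`; the variance is then algebra.
-/

open MeasureTheory Real Set
open scoped Nat

section GammaIntegral

variable {b : ℝ}

theorem integral_pow_mul_exp_neg_mul_Ioi (n : ℕ) (hb : 0 < b) :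
    ∫ x in Ioi (0 : ℝ), x ^ n * exp (-b * x) = n ! / b ^ (n + 1) := by
  have h := integral_rpow_mul_exp_neg_mul_Ioi (a := (n : ℝ) + 1) (by positivity) hb
  simp only [add_sub_cancel_right, rpow_natCast, ← neg_mul] at h
  rw [h, Gamma_nat_eq_factorial, ← Nat.cast_add_one, rpow_natCast, one_div, inv_pow,
    inv_mul_eq_div]

theorem integrableOn_pow_mul_exp_neg_mul_Ioi (n : ℕ) (hb : 0 < b) :
    IntegrableOn (fun x : ℝ ↦ x ^ n * exp (-b * x)) (Ioi 0) :=
  .of_integral_ne_zero (by rw [integral_pow_mul_exp_neg_mul_Ioi n hb]; positivity)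

end GammaIntegral

section Xgamma

noncomputable def xgammaPDF (θ x : ℝ) : ℝ :=
  (θ ^ 2 / (1 + θ)) * (1 + (θ / 2) * x ^ 2) * exp (-θ * x)

variable {θ : ℝ}

theorem integral_pow_mul_xgammaPDF (k : ℕ) (hθ : 0 < θ) :
    ∫ x in Ioi (0 : ℝ), x ^ k * xgammaPDF θ x =
      θ ^ 2 / (1 + θ) * (k ! / θ ^ (k + 1) + θ / 2 * ((k + 2)! / θ ^ (k + 3))) := by
  have hsplit : (fun x ↦ x ^ k * xgammaPDF θ x) = fun x ↦ θ ^ 2 / (1 + θ) *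
      (x ^ k * exp (-θ * x) + θ / 2 * (x ^ (k + 2) * exp (-θ * x))) := by
    ext x
    rw [xgammaPDF]
    ring
  rw [hsplit, integral_const_mul, integral_add (integrableOn_pow_mul_exp_neg_mul_Ioi k hθ)
      ((integrableOn_pow_mul_exp_neg_mul_Ioi (k + 2) hθ).const_mul _),
    integral_const_mul, integral_pow_mul_exp_neg_mul_Ioi k hθ,
    integral_pow_mul_exp_neg_mul_Ioi (k + 2) hθ]

theorem xgamma_mean (hθ : 0 < θ) :
    ∫ x in Ioi (0 : ℝ), x * xgammaPDF θ x = (θ + 3) / (θ * (1 + θ)) := by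
  have h := integral_pow_mul_xgammaPDF 1 hθ
  simp only [pow_one, Nat.reduceAdd, Nat.factorial] at h
  rw [h]
  field_simp
  ring

theorem xgamma_second_moment (hθ : 0 < θ) :
    ∫ x in Ioi (0 : ℝ), x ^ 2 * xgammaPDF θ x = 2 * (θ + 6) / (θ ^ 2 * (1 + θ)) := by
  rw [integral_pow_mul_xgammaPDF 2 hθ]
  simp only [Nat.reduceAdd, Nat.factorial]
  field_simp
  ring

end Xgamma

theorem xgamma_variance (θ : ℝ) (hθ : 0 < θ) :
    (∫ x in Set.Ioi (0:ℝ), x^2 * ((θ^2 / (1 + θ)) * (1 + (θ/2) * x^2) * Real.exp (-θ * x))) -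
      (∫ x in Set.Ioi (0:ℝ), x * ((θ^2 / (1 + θ)) * (1 + (θ/2) * x^2) * Real.exp (-θ * x)))^2 =
      (θ^2 + 8*θ + 3) / (θ^2 * (1 + θ)^2) := by
  have hmean := xgamma_mean hθ
  have hsecond := xgamma_second_moment hθ
  simp only [xgammaPDF] at hmean hsecond
  rw [hsecond, hmean]
  field_simp
  ring
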